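/- Let α ∈ (0,1], β > α, γ = αβ/(β−α), c > 0, and let f : 𝒳 → ℝ be measurable. Define h(x) = log E_x exp( c^{−γ} |Z_0(f)|^γ ). Assume there exist a measurable function V : 𝒳 → [0,∞), a set C ∈ ℬ and constants b > 0, K > 0 such that V(x) ≤ K for all x ∈ C and, for every x ∈ 𝒳, (P^m V)(x) − V(x) ≤ −exp(h(x)) + b·1_C(x), where P^m is the m-step transition kernel. Then for every initial distribution μ on 𝒳, ‖ Σ_{k=0}^{τ_C−1} |Z_k(f)| ‖_{ψ_α, P_μ} ≤ ‖τ_C‖_{ψ_β, P_μ} · c·( max( log( μ(V) + b )/log 2 , 1 ) )^{1/γ}, where μ(V) = ∫ V dμ, the inequality being interpreted in [0,∞]. In particular, taking μ = δ_x this gives ‖ Σ_{k=0}^{τ_C−1} |Z_k(f)| ‖_{ψ_α, P_x} ≤ ‖τ_C‖_{ψ_β, P_x} · c·( max( log(V(x)+b)/log 2 , 1 ) )^{1/γ}. -/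

import Mathlib

/-! Let `τ` be the return time, `Z_k` the block sums and `N_s = sup_{k<τ} exp((|Z_k|/s)^γ)`.
Since `∑_{k<τ} |Z_k| ≤ τ · max_{k<τ} |Z_k|` and `α/β + α/γ = 1`, Young's inequality gives the
pointwise bound `exp((∑_{k<τ} |Z_k| / (r s))^α) ≤ exp((τ/r)^β)^{α/β} · N_s^{α/γ}`, and Hölder's
inequality turns `E exp((τ/r)^β) ≤ 2` and `E N_s ≤ 2` into the `ψ_α`-bound at scale `r s`.

The bound on `N_s` comes from the drift condition. `N_c` is at most the sum of the block weights
`exp((|Z_k|/c)^γ)` over the excursion, whose mean is at most `V x + b` by the comparison theorem: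
the Markov property at the times `k m` telescopes the drift inequality along the excursion.
Replacing `c` by `c M^{1/γ}` replaces `N` by `N^{1/M}`, whose mean is at most
`(μ V + b)^{1/M} ≤ 2` by Jensen's inequality once `M ≥ log₂ (μ V + b)`. -/

open MeasureTheory ProbabilityTheory Real
open scoped ENNReal

/-- Prepend a point to a trajectory. -/
def prependPath {𝒳 : Type*} (x : 𝒳) (ω : ℕ → 𝒳) : ℕ → 𝒳 :=
  fun n => Nat.casesOn n x fun k => ω k

/-- `Z_k(f) = Σ_{j=0}^{m−1} f(X_{km+j})` evaluated on a trajectory. -/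
noncomputable def pathZ {𝒳 : Type*} (m : ℕ) (f : 𝒳 → ℝ) (k : ℕ) (ω : ℕ → 𝒳) : ℝ :=
  ∑ j ∈ Finset.range m, f (ω (k * m + j))

/-- The first return time `τ_C = inf{k ≥ 1 : X_{km} ∈ C}` of the `m`-skeleton to `C`,
with values in `[0,∞]` (`inf ∅ = ∞`). -/
noncomputable def pathTau {𝒳 : Type*} (m : ℕ) (C : Set 𝒳) (ω : ℕ → 𝒳) : ℝ≥0∞ :=
  sInf {c : ℝ≥0∞ | ∃ j : ℕ, c = j ∧ 1 ≤ j ∧ ω (j * m) ∈ C}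

/-- `Σ_{k=0}^{τ−1} u_k`, interpreted in `[0,∞]`. -/
noncomputable def sumBefore (τ : ℝ≥0∞) (u : ℕ → ℝ≥0∞) : ℝ≥0∞ :=
  ∑' k : ℕ, if (k : ℝ≥0∞) < τ then u k else 0

/-- The exponential function on `[0,∞]`, with `exp ∞ = ∞`. -/
noncomputable def expE (y : ℝ≥0∞) : ℝ≥0∞ :=
  if y = ⊤ then ⊤ else ENNReal.ofReal (Real.exp y.toReal)

/-- The exponential Orlicz norm `‖Y‖_{ψ_α,Q}` of a `[0,∞]`-valued variable
(with `inf ∅ = ∞`). -/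
noncomputable def psiNormE {Ω : Type*} [MeasurableSpace Ω] (Q : Measure Ω) (α : ℝ)
    (Y : Ω → ℝ≥0∞) : ℝ≥0∞ :=
  sInf {c : ℝ≥0∞ | ∃ r : ℝ, 0 < r ∧ c = ENNReal.ofReal r ∧
    ∫⁻ ω, expE (Y ω ^ α / ENNReal.ofReal (r ^ α)) ∂Q ≤ 2}

lemma expE_top : expE ⊤ = ⊤ := if_pos rfl

lemma expE_ofReal {t : ℝ} (ht : 0 ≤ t) : expE (ENNReal.ofReal t) = ENNReal.ofReal (exp t) := by
  rw [expE, if_neg ENNReal.ofReal_ne_top, ENNReal.toReal_ofReal ht]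

lemma expE_ofReal_rpow_div {t r α : ℝ} (ht : 0 ≤ t) (hr : 0 < r) (hα : 0 < α) :
    expE (ENNReal.ofReal t ^ α / ENNReal.ofReal (r ^ α)) = ENNReal.ofReal (exp ((t / r) ^ α)) := by
  rw [ENNReal.ofReal_rpow_of_nonneg ht hα.le, ← ENNReal.ofReal_div_of_pos (rpow_pos_of_pos hr α),
    ← div_rpow ht hr.le, expE_ofReal (rpow_nonneg (div_nonneg ht hr.le) α)]

lemma expE_mono : Monotone expE := by
  intro a b hab
  rcases eq_or_ne b ⊤ with rfl | hb
  · exact expE_top ▸ le_top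
  · rw [← ENNReal.ofReal_toReal hb, ← ENNReal.ofReal_toReal (ne_top_of_le_ne_top hb hab),
      expE_ofReal ENNReal.toReal_nonneg, expE_ofReal ENNReal.toReal_nonneg]
    exact ENNReal.ofReal_le_ofReal (exp_le_exp.mpr (ENNReal.toReal_mono hb hab))

lemma measurable_expE : Measurable expE :=
  Measurable.ite (measurableSet_singleton ⊤) measurable_const
    (ENNReal.measurable_ofReal.comp (measurable_exp.comp ENNReal.measurable_toReal))

section ReturnTime

variable {𝒳 : Type*} {m : ℕ} {C : Set 𝒳} {ω : ℕ → 𝒳}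

lemma pathTau_le {j : ℕ} (hj : 1 ≤ j) (hmem : ω (j * m) ∈ C) : pathTau m C ω ≤ j :=
  sInf_le ⟨j, rfl, hj, hmem⟩

lemma one_le_pathTau : 1 ≤ pathTau m C ω :=
  le_sInf fun _ ⟨_, hc, hj, _⟩ => hc ▸ Nat.one_le_cast.mpr hj

lemma pathTau_eq_top_or_exists :
    pathTau m C ω = ⊤ ∨ ∃ n : ℕ, 1 ≤ n ∧ ω (n * m) ∈ C ∧ pathTau m C ω = n := by
  by_cases hex : ∃ j : ℕ, 1 ≤ j ∧ ω (j * m) ∈ C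
  · classical
    obtain ⟨hn, hmem⟩ := Nat.find_spec hex
    refine .inr ⟨Nat.find hex, hn, hmem, le_antisymm (pathTau_le hn hmem) (le_sInf ?_)⟩
    rintro _ ⟨j, rfl, hj, hmem⟩
    exact Nat.cast_le.mpr (Nat.find_min' hex ⟨hj, hmem⟩)
  · refine .inl (sInf_eq_top.mpr ?_)
    rintro _ ⟨j, -, hj, hmem⟩
    exact absurd ⟨j, hj, hmem⟩ hex

lemma lt_pathTau_iff {k : ℕ} :
    (k : ℝ≥0∞) < pathTau m C ω ↔ ∀ j, 1 ≤ j → j ≤ k → ω (j * m) ∉ C := by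
  refine ⟨fun hk j hj hjk hmem => ?_, fun hall => ?_⟩
  · exact (pathTau_le hj hmem).not_gt (lt_of_le_of_lt (Nat.cast_le.mpr hjk) hk)
  · rcases pathTau_eq_top_or_exists (m := m) (C := C) (ω := ω) with htop | ⟨n, hn, hmem, hτ⟩
    · exact htop ▸ ENNReal.natCast_lt_top k
    · rw [hτ, Nat.cast_lt]
      by_contra! hnk
      exact hall n hn hnk hmem

open Classical in
lemma pathTau_eq_iInf (ω : ℕ → 𝒳) :
    pathTau m C ω = ⨅ j : ℕ, if 1 ≤ j ∧ ω (j * m) ∈ C then (j : ℝ≥0∞) else ⊤ := by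
  refine le_antisymm (le_iInf fun j => ?_) (le_sInf ?_)
  · split_ifs with hj
    exacts [pathTau_le hj.1 hj.2, le_top]
  · rintro _ ⟨j, rfl, hj, hmem⟩
    exact iInf_le_of_le j (if_pos ⟨hj, hmem⟩).le

lemma dependsOn_lt_pathTau (k : ℕ) :
    DependsOn (fun ω : ℕ → 𝒳 => (k : ℝ≥0∞) < pathTau m C ω) (Set.Iic (k * m)) := by
  intro ω ω' h
  simp only [lt_pathTau_iff]
  refine propext (forall₂_congr fun j _ => imp_congr_right fun hjk => ?_)
  rw [h (j * m) (Set.mem_Iic.mpr (Nat.mul_le_mul_right m hjk))]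

lemma ite_lt_pathTau_indicator_eq {V : 𝒳 → ℝ} {b : ℝ} {n : ℕ} (hn : 1 ≤ n) (ω : ℕ → 𝒳) :
    (if (n : ℝ≥0∞) < pathTau m C ω then
      ENNReal.ofReal (V (ω (n * m)) + b * C.indicator (fun _ => 1) (ω (n * m))) else 0)
    = if (n : ℝ≥0∞) < pathTau m C ω then ENNReal.ofReal (V (ω (n * m))) else 0 := by
  split_ifs with h
  · rw [Set.indicator_of_notMem (lt_pathTau_iff.mp h n hn le_rfl), mul_zero, add_zero]
  · rfl

lemma pathZ_shift (f : 𝒳 → ℝ) (k : ℕ) :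
    pathZ m f 0 (fun i => ω (k * m + i)) = pathZ m f k ω := by
  simp only [pathZ, zero_mul, zero_add]

variable [MeasurableSpace 𝒳]

lemma measurable_pathTau (hC : MeasurableSet C) : Measurable (pathTau m C) := by
  classical
  simp_rw [funext pathTau_eq_iInf]
  refine Measurable.iInf fun j => Measurable.ite ?_ measurable_const measurable_const
  exact (MeasurableSet.const _).inter (measurable_pi_apply (j * m) hC)

lemma measurable_pathZ {f : 𝒳 → ℝ} (hf : Measurable f) (k : ℕ) : Measurable (pathZ m f k) :=
  Finset.measurable_sum _ fun _ _ => hf.comp (measurable_pi_apply _)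

end ReturnTime

noncomputable def supBefore (τ : ℝ≥0∞) (u : ℕ → ℝ≥0∞) : ℝ≥0∞ :=
  ⨆ k : ℕ, if (k : ℝ≥0∞) < τ then u k else 0

section BeforeTau
variable {τ : ℝ≥0∞} {u : ℕ → ℝ≥0∞}

lemma le_supBefore {k : ℕ} (hk : (k : ℝ≥0∞) < τ) : u k ≤ supBefore τ u :=
  le_iSup_of_le k (if_pos hk).ge

lemma supBefore_le_sumBefore : supBefore τ u ≤ sumBefore τ u :=
  iSup_le fun k => ENNReal.le_tsum (f := fun k : ℕ => if (k : ℝ≥0∞) < τ then u k else 0) k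

lemma sumBefore_natCast (n : ℕ) : sumBefore n u = ∑ k ∈ Finset.range n, u k := by
  rw [sumBefore, tsum_eq_sum (s := Finset.range n) fun (k : ℕ) hk => if_neg (by simpa using hk)]
  exact Finset.sum_congr rfl fun (k : ℕ) hk => if_pos (by simpa using hk)

variable {Ω : Type*} [MeasurableSpace Ω] {τ : Ω → ℝ≥0∞} {u : ℕ → Ω → ℝ≥0∞}

lemma measurable_supBefore (hτ : Measurable τ) (hu : ∀ k, Measurable (u k)) :
    Measurable fun ω => supBefore (τ ω) fun k => u k ω :=
  .iSup fun k => .ite (hτ measurableSet_Ioi) (hu k) measurable_const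

lemma measurable_sumBefore (hτ : Measurable τ) (hu : ∀ k, Measurable (u k)) :
    Measurable fun ω => sumBefore (τ ω) fun k => u k ω :=
  .tsum fun k => .ite (hτ measurableSet_Ioi) (hu k) measurable_const

end BeforeTau

lemma measurable_prependPath {𝒳 : Type*} [MeasurableSpace 𝒳] (x : 𝒳) :
    Measurable (prependPath x) :=
  measurable_pi_lambda _ fun n => by
    cases n with
    | zero => exact measurable_const
    | succ k => exact measurable_pi_apply k

/-- `Pa x` is the law of the canonical chain started at `x`; the Ionescu–Tulcea path measures
are characterized by this first-step recursion. -/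
def IsPathMeasure {𝒳 : Type*} [MeasurableSpace 𝒳] (κ : Kernel 𝒳 𝒳)
    (Pa : 𝒳 → Measure (ℕ → 𝒳)) : Prop :=
  ∀ x, Pa x = (κ x).bind fun y => (Pa y).map (prependPath x)

namespace IsPathMeasure

variable {𝒳 : Type*} [MeasurableSpace 𝒳] {κ : Kernel 𝒳 𝒳} {Pa : 𝒳 → Measure (ℕ → 𝒳)}
  {G H : (ℕ → 𝒳) → ℝ≥0∞}

lemma lintegral_eq (hPa : IsPathMeasure κ Pa) (hPa_meas : Measurable Pa) (hG : Measurable G)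
    (x : 𝒳) : ∫⁻ ω, G ω ∂Pa x = ∫⁻ y, ∫⁻ η, G (prependPath x η) ∂Pa y ∂κ x := by
  have hmap : Measurable fun y => (Pa y).map (prependPath x) :=
    (Measure.measurable_map _ (measurable_prependPath x)).comp hPa_meas
  rw [hPa x, Measure.lintegral_bind hmap.aemeasurable hG.aemeasurable]
  exact lintegral_congr fun y => lintegral_map hG (measurable_prependPath x)

/-- Under `Pa x` the path starts at `x`. -/
lemma lintegral_mul_of_dependsOn_zero (hPa : IsPathMeasure κ Pa) (hPa_meas : Measurable Pa)
    (hG : Measurable G) (hGdep : DependsOn G {0}) (hH : Measurable H) (x : 𝒳) :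
    ∫⁻ ω, G ω * H ω ∂Pa x = G (fun _ => x) * ∫⁻ ω, H ω ∂Pa x := by
  have hGx (η : ℕ → 𝒳) : G (prependPath x η) = G fun _ => x :=
    hGdep fun i hi => by rw [Set.mem_singleton_iff.mp hi]; rfl
  have hHx : Measurable fun y => ∫⁻ η, H (prependPath x η) ∂Pa y :=
    (Measure.measurable_lintegral (hH.comp (measurable_prependPath x))).comp hPa_meas
  rw [hPa.lintegral_eq hPa_meas (G := fun ω => G ω * H ω) (hG.mul hH),
    hPa.lintegral_eq hPa_meas hH, ← lintegral_const_mul _ hHx]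
  simp only [hGx]
  exact lintegral_congr fun y => lintegral_const_mul _ (hH.comp (measurable_prependPath x))

lemma lintegral_comp_eval_zero [∀ x, IsProbabilityMeasure (Pa x)] (hPa : IsPathMeasure κ Pa)
    (hPa_meas : Measurable Pa) {F : 𝒳 → ℝ≥0∞} (hF : Measurable F) (x : 𝒳) :
    ∫⁻ ω, F (ω 0) ∂Pa x = F x := by
  simpa using hPa.lintegral_mul_of_dependsOn_zero hPa_meas (hF.comp (measurable_pi_apply 0))
    (fun ω ω' h => congrArg F (h 0 rfl)) (measurable_const (a := 1)) x

/-- The Markov property at the deterministic time `n`. -/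
lemma lintegral_mul_comp_shift [∀ x, IsProbabilityMeasure (Pa x)] (hPa : IsPathMeasure κ Pa)
    (hPa_meas : Measurable Pa) (hH : Measurable H) (n : ℕ) :
    ∀ x : 𝒳, ∀ G : (ℕ → 𝒳) → ℝ≥0∞, Measurable G → DependsOn G (Set.Iic n) →
      ∫⁻ ω, G ω * H (fun i => ω (n + i)) ∂Pa x = ∫⁻ ω, G ω * ∫⁻ η, H η ∂Pa (ω n) ∂Pa x := by
  have hW : Measurable fun y => ∫⁻ η, H η ∂Pa y := (Measure.measurable_lintegral hH).comp hPa_meas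
  induction n with
  | zero =>
    intro x G hG hGdep
    replace hGdep : DependsOn G {0} := hGdep.mono fun i hi => Nat.le_zero.mp hi
    simp only [zero_add]
    rw [hPa.lintegral_mul_of_dependsOn_zero hPa_meas hG hGdep hH,
      hPa.lintegral_mul_of_dependsOn_zero hPa_meas (H := fun ω => ∫⁻ η, H η ∂Pa (ω 0)) hG hGdep
        (hW.comp (measurable_pi_apply 0)),
      hPa.lintegral_comp_eval_zero hPa_meas hW]
  | succ n ih =>
    intro x G hG hGdep
    have hGx : DependsOn (fun η => G (prependPath x η)) (Set.Iic n) := fun η η' h =>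
      hGdep fun i hi => by
        cases i with
        | zero => rfl
        | succ j => exact h j (Nat.le_of_succ_le_succ hi)
    have hshift (η : ℕ → 𝒳) : (fun i => prependPath x η (n + 1 + i)) = fun i => η (n + i) := by
      funext i
      rw [Nat.add_right_comm]
      rfl
    have hHn : Measurable fun ω : ℕ → 𝒳 => G ω * H fun i => ω (n + 1 + i) :=
      hG.mul (hH.comp (measurable_pi_lambda _ fun i => measurable_pi_apply (n + 1 + i)))
    have hWn : Measurable fun ω : ℕ → 𝒳 => G ω * ∫⁻ η, H η ∂Pa (ω (n + 1)) :=
      hG.mul (hW.comp (measurable_pi_apply (n + 1)))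
    rw [hPa.lintegral_eq hPa_meas hHn, hPa.lintegral_eq hPa_meas hWn]
    simp only [hshift]
    exact lintegral_congr fun y => ih y _ (hG.comp (measurable_prependPath x)) hGx

end IsPathMeasure

section Comparison

variable {𝒳 : Type*} [MeasurableSpace 𝒳] {κ : Kernel 𝒳 𝒳} {Pa : 𝒳 → Measure (ℕ → 𝒳)}
  [∀ x, IsProbabilityMeasure (Pa x)] {m : ℕ} {C : Set 𝒳} {V : 𝒳 → ℝ} {b : ℝ}
  {w : (ℕ → 𝒳) → ℝ≥0∞}

lemma lintegral_drift_step (hPa : IsPathMeasure κ Pa) (hPa_meas : Measurable Pa)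
    (hC : MeasurableSet C) (hVm : Measurable V) (hw : Measurable w)
    (hdrift : ∀ y, ∫⁻ ω, ENNReal.ofReal (V (ω m)) + w ω ∂Pa y
      ≤ ENNReal.ofReal (V y + b * C.indicator (fun _ => 1) y)) (n : ℕ) (x : 𝒳) :
    ∫⁻ ω, (if ((n + 1 : ℕ) : ℝ≥0∞) < pathTau m C ω then ENNReal.ofReal (V (ω ((n + 1) * m)))
        else 0) ∂Pa x
      + ∫⁻ ω, (if (n : ℝ≥0∞) < pathTau m C ω then w (fun i => ω (n * m + i)) else 0) ∂Pa x
      ≤ ∫⁻ ω, (if (n : ℝ≥0∞) < pathTau m C ω then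
          ENNReal.ofReal (V (ω (n * m)) + b * C.indicator (fun _ => 1) (ω (n * m))) else 0)
        ∂Pa x := by
  set G : (ℕ → 𝒳) → ℝ≥0∞ := fun ω => if (n : ℝ≥0∞) < pathTau m C ω then 1 else 0
  have hG : Measurable G := .ite (measurable_pathTau hC measurableSet_Ioi) measurable_const
    measurable_const
  have hGdep : DependsOn G (Set.Iic (n * m)) := fun ω ω' h => by
    simp only [G, dependsOn_lt_pathTau n h]
  have hVn (j : ℕ) : Measurable fun ω : ℕ → 𝒳 => ENNReal.ofReal (V (ω j)) :=
    ENNReal.measurable_ofReal.comp (hVm.comp (measurable_pi_apply j))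
  have hH : Measurable fun η : ℕ → 𝒳 => ENNReal.ofReal (V (η m)) + w η := (hVn m).add hw
  have hmono (ω : ℕ → 𝒳) : ((n + 1 : ℕ) : ℝ≥0∞) < pathTau m C ω → (n : ℝ≥0∞) < pathTau m C ω :=
    lt_trans (Nat.cast_lt.mpr n.lt_succ_self)
  calc _ = ∫⁻ ω, (if ((n + 1 : ℕ) : ℝ≥0∞) < pathTau m C ω then
          ENNReal.ofReal (V (ω ((n + 1) * m))) else 0)
          + (if (n : ℝ≥0∞) < pathTau m C ω then w (fun i => ω (n * m + i)) else 0) ∂Pa x :=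
        (lintegral_add_left (.ite (measurable_pathTau hC measurableSet_Ioi) (hVn _)
          measurable_const) _).symm
    _ ≤ ∫⁻ ω, G ω * (ENNReal.ofReal (V (ω (n * m + m))) + w fun i => ω (n * m + i)) ∂Pa x := by
        refine lintegral_mono fun ω => ?_
        simp only [G, boole_mul, ← Nat.succ_mul]
        by_cases h : (n : ℝ≥0∞) < pathTau m C ω
        · simp only [if_pos h]
          gcongr
          split_ifs
          exacts [le_rfl, zero_le]
        · rw [if_neg h, if_neg h, if_neg (mt (hmono ω) h), zero_add]
    _ = ∫⁻ ω, G ω * ∫⁻ η, ENNReal.ofReal (V (η m)) + w η ∂Pa (ω (n * m)) ∂Pa x :=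
        hPa.lintegral_mul_comp_shift hPa_meas hH (n * m) x G hG hGdep
    _ ≤ _ := lintegral_mono fun ω => by
        simp only [G, boole_mul]
        split_ifs
        exacts [hdrift _, le_rfl]

lemma sum_range_lintegral_ite_le (hPa : IsPathMeasure κ Pa) (hPa_meas : Measurable Pa)
    (hC : MeasurableSet C) (hVm : Measurable V) (hb : 0 ≤ b) (hw : Measurable w)
    (hdrift : ∀ y, ∫⁻ ω, ENNReal.ofReal (V (ω m)) + w ω ∂Pa y
      ≤ ENNReal.ofReal (V y + b * C.indicator (fun _ => 1) y)) (n : ℕ) (x : 𝒳) :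
    ∑ k ∈ Finset.range n,
        ∫⁻ ω, (if (k : ℝ≥0∞) < pathTau m C ω then w (fun i => ω (k * m + i)) else 0) ∂Pa x
      ≤ ENNReal.ofReal (V x + b) := by
  set J : ℕ → ℝ≥0∞ := fun n =>
    ∫⁻ ω, (if (n : ℝ≥0∞) < pathTau m C ω then ENNReal.ofReal (V (ω (n * m))) else 0) ∂Pa x
  set W : ℕ → ℝ≥0∞ := fun n =>
    ∫⁻ ω, (if (n : ℝ≥0∞) < pathTau m C ω then w (fun i => ω (n * m + i)) else 0) ∂Pa x
  have hstep := lintegral_drift_step hPa hPa_meas hC hVm hw hdrift (x := x)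
  -- `J (n + 1) + ∑_{k ≤ n} W k` is nonincreasing in `n ≥ 0`: the drift term `b 1_C` is only
  -- paid at time `0`, since `X_{nm} ∉ C` on `{n < τ}` for `n ≥ 1`.
  have hbound (n : ℕ) : J (n + 1) + ∑ k ∈ Finset.range (n + 1), W k ≤ ENNReal.ofReal (V x + b) := by
    induction n with
    | zero =>
      have hF : Measurable fun y => ENNReal.ofReal (V y + b * C.indicator (fun _ => 1) y) :=
        ENNReal.measurable_ofReal.comp (hVm.add (measurable_const.mul
          (measurable_const.indicator hC)))
      rw [Finset.sum_range_one]
      refine (hstep 0).trans ?_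
      simp only [Nat.cast_zero, zero_mul, if_pos (lt_of_lt_of_le one_pos one_le_pathTau)]
      rw [hPa.lintegral_comp_eval_zero hPa_meas hF]
      gcongr
      exact mul_le_of_le_one_right hb (Set.indicator_le_self' (fun _ _ => zero_le_one) x)
    | succ n ih =>
      calc J (n + 2) + ∑ k ∈ Finset.range (n + 2), W k
          = (J (n + 1 + 1) + W (n + 1)) + ∑ k ∈ Finset.range (n + 1), W k := by
            rw [Finset.sum_range_succ _ (n + 1)]; ring
        _ ≤ J (n + 1) + ∑ k ∈ Finset.range (n + 1), W k := by
            gcongr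
            refine (hstep (n + 1)).trans_eq ?_
            simp only [ite_lt_pathTau_indicator_eq n.succ_pos, J]
        _ ≤ _ := ih
  exact (Finset.sum_le_sum_of_subset (Finset.range_mono n.le_succ)).trans
    (le_add_self.trans (hbound n))

/-- The comparison theorem for the `m`-skeleton. -/
lemma lintegral_sumBefore_le (hPa : IsPathMeasure κ Pa) (hPa_meas : Measurable Pa)
    (hC : MeasurableSet C) (hVm : Measurable V) (hb : 0 ≤ b) (hw : Measurable w)
    (hdrift : ∀ y, ∫⁻ ω, ENNReal.ofReal (V (ω m)) + w ω ∂Pa y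
      ≤ ENNReal.ofReal (V y + b * C.indicator (fun _ => 1) y)) (x : 𝒳) :
    ∫⁻ ω, sumBefore (pathTau m C ω) (fun k => w fun i => ω (k * m + i)) ∂Pa x
      ≤ ENNReal.ofReal (V x + b) := by
  have hW (k : ℕ) : Measurable fun ω : ℕ → 𝒳 =>
      if (k : ℝ≥0∞) < pathTau m C ω then w (fun i => ω (k * m + i)) else 0 :=
    .ite (measurable_pathTau hC measurableSet_Ioi)
      (hw.comp (measurable_pi_lambda _ fun i => measurable_pi_apply _)) measurable_const
  simp only [sumBefore]
  rw [lintegral_tsum fun k => (hW k).aemeasurable, ENNReal.tsum_eq_iSup_nat]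
  exact iSup_le fun n => sum_range_lintegral_ite_le hPa hPa_meas hC hVm hb hw hdrift n x

end Comparison

section OrliczNorm

variable {Ω : Type*} [MeasurableSpace Ω] {Q : Measure Ω} {α β : ℝ} {X Y : Ω → ℝ≥0∞}

lemma psiNormE_le_mul {D : ℝ} (hD : 0 < D)
    (h : ∀ r : ℝ, 0 < r → ∫⁻ ω, expE (Y ω ^ β / ENNReal.ofReal (r ^ β)) ∂Q ≤ 2 →
      ∫⁻ ω, expE (X ω ^ α / ENNReal.ofReal ((r * D) ^ α)) ∂Q ≤ 2) :
    psiNormE Q α X ≤ psiNormE Q β Y * ENNReal.ofReal D := by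
  conv_rhs => rw [psiNormE, sInf_eq_iInf', ENNReal.iInf_mul_of_ne (by simpa using hD)
    ENNReal.ofReal_ne_top]
  refine le_iInf ?_
  rintro ⟨_, r, hr, rfl, hint⟩
  rw [← ENNReal.ofReal_mul hr.le]
  exact sInf_le ⟨r * D, mul_pos hr hD, rfl, h r hr hint⟩

lemma one_le_psiNormE [IsProbabilityMeasure Q] (hβ : 0 < β) (hY : ∀ ω, 1 ≤ Y ω) :
    1 ≤ psiNormE Q β Y := by
  refine le_sInf ?_
  rintro _ ⟨r, hr, rfl, hint⟩
  by_contra! hr1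
  have hrβ : ENNReal.ofReal (r ^ β) ≤ 1 := ENNReal.ofReal_le_one.mpr
    (rpow_le_one hr.le (ENNReal.ofReal_lt_one.mp hr1).le hβ.le)
  have hexp (ω : Ω) : ENNReal.ofReal (exp 1) ≤ expE (Y ω ^ β / ENNReal.ofReal (r ^ β)) := by
    rw [← expE_ofReal zero_le_one, ENNReal.ofReal_one]
    refine expE_mono ((ENNReal.le_div_iff_mul_le
      (.inl (ENNReal.ofReal_pos.mpr (rpow_pos_of_pos hr β)).ne') (.inl ENNReal.ofReal_ne_top)).mpr ?_)
    exact (one_mul _).trans_le (hrβ.trans (ENNReal.one_le_rpow (hY ω) hβ))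
  have h2 : (2 : ℝ≥0∞) < ENNReal.ofReal (exp 1) := by
    simpa using (ENNReal.ofReal_lt_ofReal_iff (exp_pos 1)).mpr exp_one_gt_two
  refine h2.not_ge (le_trans ?_ hint)
  calc ENNReal.ofReal (exp 1) = ∫⁻ _, ENNReal.ofReal (exp 1) ∂Q := by simp
    _ ≤ _ := lintegral_mono hexp

end OrliczNorm

lemma rpow_inv_max_log_div_log_two_le {A : ℝ} (hA : 0 ≤ A) :
    A ^ (max (log A / log 2) 1)⁻¹ ≤ 2 := by
  set M := max (log A / log 2) 1
  have hM : 0 < M := one_pos.trans_le (le_max_right _ _)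
  rcases le_or_gt A 1 with hA1 | hA1
  · exact (rpow_le_one hA hA1 (inv_nonneg.mpr hM.le)).trans one_le_two
  · have hlog : log A ≤ M * log 2 :=
      (div_le_iff₀ (log_pos one_lt_two)).mp (le_max_left _ _)
    rw [rpow_def_of_pos (one_pos.trans hA1), ← exp_log two_pos, exp_le_exp, ← div_eq_mul_inv,
      div_le_iff₀ hM, mul_comm]
    exact hlog

lemma mul_rpow_le_weighted_add {u v α β γ : ℝ} (hu : 0 ≤ u) (hv : 0 ≤ v) (hα : 0 < α)
    (hβ : 0 < β) (hγ : 0 < γ) (hαβγ : α / β + α / γ = 1) :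
    (u * v) ^ α ≤ α / β * u ^ β + α / γ * v ^ γ := by
  have key := geom_mean_le_arith_mean2_weighted (div_pos hα hβ).le (div_pos hα hγ).le
    (rpow_nonneg hu β) (rpow_nonneg hv γ) hαβγ
  rwa [← rpow_mul hu, ← rpow_mul hv, mul_div_cancel₀ _ hβ.ne', mul_div_cancel₀ _ hγ.ne',
    ← mul_rpow hu hv] at key

lemma ofReal_exp_mul_rpow_le {u v α β γ : ℝ} (hu : 0 ≤ u) (hv : 0 ≤ v) (hα : 0 < α)
    (hβ : 0 < β) (hγ : 0 < γ) (hαβγ : α / β + α / γ = 1) :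
    ENNReal.ofReal (exp ((u * v) ^ α))
      ≤ ENNReal.ofReal (exp (u ^ β)) ^ (α / β) * ENNReal.ofReal (exp (v ^ γ)) ^ (α / γ) := by
  rw [ENNReal.ofReal_rpow_of_nonneg (exp_nonneg _) (div_pos hα hβ).le,
    ENNReal.ofReal_rpow_of_nonneg (exp_nonneg _) (div_pos hα hγ).le, ← exp_mul, ← exp_mul,
    ← ENNReal.ofReal_mul (exp_nonneg _), ← exp_add]
  gcongr
  linarith [mul_rpow_le_weighted_add hu hv hα hβ hγ hαβγ]

noncomputable def blockExp {𝒳 : Type*} (m : ℕ) (f : 𝒳 → ℝ) (γ s : ℝ) (k : ℕ) (ω : ℕ → 𝒳) :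
    ℝ≥0∞ :=
  ENNReal.ofReal (exp (|pathZ m f k ω| ^ γ / s ^ γ))

section BlockExp

variable {𝒳 : Type*} {m : ℕ} {C : Set 𝒳} {f : 𝒳 → ℝ} {α β γ s : ℝ}

lemma blockExp_eq (hs : 0 < s) (k : ℕ) (ω : ℕ → 𝒳) :
    blockExp m f γ s k ω = ENNReal.ofReal (exp ((|pathZ m f k ω| / s) ^ γ)) := by
  rw [blockExp, div_rpow (abs_nonneg _) hs.le]

lemma blockExp_shift (k : ℕ) (ω : ℕ → 𝒳) :
    blockExp m f γ s 0 (fun i => ω (k * m + i)) = blockExp m f γ s k ω := by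
  simp only [blockExp, pathZ_shift]

lemma one_le_blockExp (hs : 0 ≤ s) (k : ℕ) (ω : ℕ → 𝒳) : 1 ≤ blockExp m f γ s k ω := by
  rw [blockExp, ← ENNReal.ofReal_one]
  exact ENNReal.ofReal_le_ofReal
    (one_le_exp (div_nonneg (rpow_nonneg (abs_nonneg _) γ) (rpow_nonneg hs γ)))

lemma blockExp_mul_rpow_inv {M : ℝ} (hγ : 0 < γ) (hs : 0 < s) (hM : 0 < M) (k : ℕ)
    (ω : ℕ → 𝒳) : blockExp m f γ (s * M ^ (1 / γ)) k ω = blockExp m f γ s k ω ^ M⁻¹ := by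
  rw [blockExp, blockExp, ENNReal.ofReal_rpow_of_nonneg (exp_nonneg _) (inv_pos.mpr hM).le,
    ← exp_mul, mul_rpow hs.le (rpow_nonneg hM.le _), ← rpow_mul hM.le,
    one_div_mul_cancel hγ.ne', rpow_one, ← div_div, div_eq_mul_inv _ M]

lemma expE_sumBefore_le (hα : 0 < α) (hβ : 0 < β) (hγ : 0 < γ) (hαβγ : α / β + α / γ = 1)
    {r : ℝ} (hr : 0 < r) (hs : 0 < s) (ω : ℕ → 𝒳) :
    expE ((sumBefore (pathTau m C ω) fun k => ENNReal.ofReal |pathZ m f k ω|) ^ α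
        / ENNReal.ofReal ((r * s) ^ α))
      ≤ expE (pathTau m C ω ^ β / ENNReal.ofReal (r ^ β)) ^ (α / β)
        * supBefore (pathTau m C ω) (fun k => blockExp m f γ s k ω) ^ (α / γ) := by
  rcases pathTau_eq_top_or_exists (m := m) (C := C) (ω := ω) with hτ | ⟨n, hn, -, hτ⟩
  · have hN : supBefore (pathTau m C ω) (fun k => blockExp m f γ s k ω) ^ (α / γ) ≠ 0 :=
      (one_pos.trans_le (ENNReal.one_le_rpow ((one_le_blockExp hs.le 0 ω).trans
        (le_supBefore (lt_of_lt_of_le (by norm_num) one_le_pathTau))) (div_pos hα hγ))).ne'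
    have hF : expE (pathTau m C ω ^ β / ENNReal.ofReal (r ^ β)) ^ (α / β) = ⊤ := by
      rw [hτ, ENNReal.top_rpow_of_pos hβ, ENNReal.top_div_of_ne_top ENNReal.ofReal_ne_top,
        expE_top, ENNReal.top_rpow_of_pos (div_pos hα hβ)]
    rw [hF, ENNReal.top_mul hN]
    exact le_top
  · obtain ⟨k₀, hk₀, hmax⟩ := Finset.exists_max_image (Finset.range n) (fun k => |pathZ m f k ω|)
      ⟨0, Finset.mem_range.mpr hn⟩
    set T := ∑ k ∈ Finset.range n, |pathZ m f k ω|
    have hT : T ≤ n * |pathZ m f k₀ ω| := by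
      simpa using Finset.sum_le_card_nsmul _ _ _ hmax
    have hsum : (sumBefore (pathTau m C ω) fun k => ENNReal.ofReal |pathZ m f k ω|)
        = ENNReal.ofReal T := by
      rw [hτ, sumBefore_natCast, ENNReal.ofReal_sum_of_nonneg fun k _ => abs_nonneg _]
    have hk₀τ : (k₀ : ℝ≥0∞) < pathTau m C ω := hτ ▸ Nat.cast_lt.mpr (Finset.mem_range.mp hk₀)
    calc _ = ENNReal.ofReal (exp ((T / (r * s)) ^ α)) := by
          rw [hsum, expE_ofReal_rpow_div (Finset.sum_nonneg fun k _ => abs_nonneg _)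
            (mul_pos hr hs) hα]
      _ ≤ ENNReal.ofReal (exp ((n / r * (|pathZ m f k₀ ω| / s)) ^ α)) := by
          gcongr
          rw [div_mul_div_comm]
          gcongr
      _ ≤ ENNReal.ofReal (exp ((n / r) ^ β)) ^ (α / β)
          * ENNReal.ofReal (exp ((|pathZ m f k₀ ω| / s) ^ γ)) ^ (α / γ) :=
          ofReal_exp_mul_rpow_le (by positivity) (by positivity) hα hβ hγ hαβγ
      _ ≤ _ := by
          have hexpτ : expE (pathTau m C ω ^ β / ENNReal.ofReal (r ^ β))
              = ENNReal.ofReal (exp ((n / r) ^ β)) := by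
            rw [hτ, ← ENNReal.ofReal_natCast, expE_ofReal_rpow_div n.cast_nonneg hr hβ]
          rw [hexpτ, ← blockExp_eq hs]
          gcongr
          exact le_supBefore hk₀τ

end BlockExp

lemma supBefore_rpow_le {τ : ℝ≥0∞} {u : ℕ → ℝ≥0∞} {θ : ℝ} (hθ : 0 ≤ θ) :
    supBefore τ (fun k => u k ^ θ) ≤ supBefore τ u ^ θ :=
  iSup_le fun k => by
    split_ifs with hk
    exacts [ENNReal.rpow_le_rpow (le_supBefore hk) hθ, zero_le]

lemma lintegral_rpow_le_rpow_lintegral {Ω : Type*} [MeasurableSpace Ω] {Q : Measure Ω}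
    [IsProbabilityMeasure Q] {g : Ω → ℝ≥0∞} (hg : AEMeasurable g Q) {θ : ℝ} (hθ₀ : 0 ≤ θ)
    (hθ₁ : θ ≤ 1) : ∫⁻ ω, g ω ^ θ ∂Q ≤ (∫⁻ ω, g ω ∂Q) ^ θ := by
  simpa using ENNReal.lintegral_mul_norm_pow_le hg (aemeasurable_const (b := 1)) hθ₀
    (sub_nonneg.mpr hθ₁) (add_sub_cancel θ 1)

section ExcursionBound

variable {𝒳 : Type*} [MeasurableSpace 𝒳] {m : ℕ} {C : Set 𝒳} {f : 𝒳 → ℝ} {α β γ c : ℝ}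

lemma measurable_blockExp (hf : Measurable f) (k : ℕ) : Measurable (blockExp m f γ c k) :=
  ENNReal.measurable_ofReal.comp ((((measurable_pathZ hf k).abs.pow_const γ).div_const _).exp)

lemma measurable_supBefore_blockExp (hC : MeasurableSet C) (hf : Measurable f) :
    Measurable fun ω => supBefore (pathTau m C ω) fun k => blockExp m f γ c k ω :=
  measurable_supBefore (measurable_pathTau hC) (measurable_blockExp hf)

lemma lintegral_expE_sumBefore_le_two {Q : Measure (ℕ → 𝒳)} (hC : MeasurableSet C)
    (hf : Measurable f) (hα : 0 < α) (hβ : 0 < β) (hγ : 0 < γ) (hαβγ : α / β + α / γ = 1)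
    {r : ℝ} (hr : 0 < r) (hc : 0 < c)
    (hτ : ∫⁻ ω, expE (pathTau m C ω ^ β / ENNReal.ofReal (r ^ β)) ∂Q ≤ 2)
    (hN : ∫⁻ ω, supBefore (pathTau m C ω) (fun k => blockExp m f γ c k ω) ∂Q ≤ 2) :
    ∫⁻ ω, expE ((sumBefore (pathTau m C ω) fun k => ENNReal.ofReal |pathZ m f k ω|) ^ α
      / ENNReal.ofReal ((r * c) ^ α)) ∂Q ≤ 2 := by
  have hF : Measurable fun ω => expE (pathTau m C ω ^ β / ENNReal.ofReal (r ^ β)) :=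
    measurable_expE.comp (((measurable_pathTau hC).pow_const β).div_const _)
  calc _ ≤ ∫⁻ ω, expE (pathTau m C ω ^ β / ENNReal.ofReal (r ^ β)) ^ (α / β)
          * supBefore (pathTau m C ω) (fun k => blockExp m f γ c k ω) ^ (α / γ) ∂Q :=
        lintegral_mono fun ω => expE_sumBefore_le hα hβ hγ hαβγ hr hc ω
    _ ≤ (∫⁻ ω, expE (pathTau m C ω ^ β / ENNReal.ofReal (r ^ β)) ∂Q) ^ (α / β)
          * (∫⁻ ω, supBefore (pathTau m C ω) (fun k => blockExp m f γ c k ω) ∂Q) ^ (α / γ) :=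
        ENNReal.lintegral_mul_norm_pow_le hF.aemeasurable
          (measurable_supBefore_blockExp hC hf).aemeasurable (div_pos hα hβ).le
          (div_pos hα hγ).le hαβγ
    _ ≤ 2 ^ (α / β) * 2 ^ (α / γ) := by gcongr
    _ = 2 := by rw [← ENNReal.rpow_add _ _ two_ne_zero ENNReal.ofNat_ne_top, hαβγ,
          ENNReal.rpow_one]

lemma lintegral_supBefore_blockExp_le_two {Q : Measure (ℕ → 𝒳)} [IsProbabilityMeasure Q]
    (hC : MeasurableSet C) (hf : Measurable f) (hγ : 0 < γ) (hc : 0 < c) {A : ℝ} (hA : 0 ≤ A)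
    (hN : ∫⁻ ω, supBefore (pathTau m C ω) (fun k => blockExp m f γ c k ω) ∂Q
      ≤ ENNReal.ofReal A) :
    ∫⁻ ω, supBefore (pathTau m C ω)
      (fun k => blockExp m f γ (c * max (log A / log 2) 1 ^ (1 / γ)) k ω) ∂Q ≤ 2 := by
  set M := max (log A / log 2) 1
  have hM : 1 ≤ M := le_max_right _ _
  have hM₀ : 0 < M := one_pos.trans_le hM
  simp only [blockExp_mul_rpow_inv hγ hc hM₀]
  calc _ ≤ ∫⁻ ω, supBefore (pathTau m C ω) (fun k => blockExp m f γ c k ω) ^ M⁻¹ ∂Q :=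
        lintegral_mono fun ω => supBefore_rpow_le (inv_nonneg.mpr hM₀.le)
    _ ≤ (∫⁻ ω, supBefore (pathTau m C ω) (fun k => blockExp m f γ c k ω) ∂Q) ^ M⁻¹ :=
        lintegral_rpow_le_rpow_lintegral (measurable_supBefore_blockExp hC hf).aemeasurable
          (inv_nonneg.mpr hM₀.le) (inv_le_one_of_one_le₀ hM)
    _ ≤ ENNReal.ofReal A ^ M⁻¹ := by gcongr
    _ ≤ 2 := by
        rw [ENNReal.ofReal_rpow_of_nonneg hA (inv_nonneg.mpr hM₀.le), ← ENNReal.ofReal_ofNat 2]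
        exact ENNReal.ofReal_le_ofReal (rpow_inv_max_log_div_log_two_le hA)

variable {κ : Kernel 𝒳 𝒳} {Pa : 𝒳 → Measure (ℕ → 𝒳)} [∀ x, IsProbabilityMeasure (Pa x)]
  {V : 𝒳 → ℝ} {b : ℝ}

lemma lintegral_bind_supBefore_blockExp_le (hPa : IsPathMeasure κ Pa) (hPa_meas : Measurable Pa)
    (hC : MeasurableSet C) (hf : Measurable f) (hVm : Measurable V) (hb : 0 ≤ b)
    (hdrift : ∀ y, ∫⁻ ω, ENNReal.ofReal (V (ω m)) + blockExp m f γ c 0 ω ∂Pa y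
      ≤ ENNReal.ofReal (V y + b * C.indicator (fun _ => 1) y)) (μ : Measure 𝒳) :
    ∫⁻ ω, supBefore (pathTau m C ω) (fun k => blockExp m f γ c k ω) ∂μ.bind Pa
      ≤ ∫⁻ x, ENNReal.ofReal (V x + b) ∂μ := by
  have hS : Measurable fun ω => sumBefore (pathTau m C ω) fun k => blockExp m f γ c k ω :=
    measurable_sumBefore (measurable_pathTau hC) (measurable_blockExp hf)
  calc _ ≤ ∫⁻ ω, sumBefore (pathTau m C ω) (fun k => blockExp m f γ c k ω) ∂μ.bind Pa :=
        lintegral_mono fun ω => supBefore_le_sumBefore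
    _ = ∫⁻ x, ∫⁻ ω, sumBefore (pathTau m C ω) (fun k => blockExp m f γ c k ω) ∂Pa x ∂μ :=
        Measure.lintegral_bind hPa_meas.aemeasurable hS.aemeasurable
    _ ≤ _ := lintegral_mono fun x => by
        simpa only [blockExp_shift] using lintegral_sumBefore_le hPa hPa_meas hC hVm hb
          (measurable_blockExp hf 0) hdrift x

end ExcursionBound

lemma psiNormE_sumBefore_le {𝒳 : Type*} [MeasurableSpace 𝒳] {κ : Kernel 𝒳 𝒳}
    {Pa : 𝒳 → Measure (ℕ → 𝒳)} [∀ x, IsProbabilityMeasure (Pa x)] (hPa : IsPathMeasure κ Pa)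
    (hPa_meas : Measurable Pa) {m : ℕ} {f : 𝒳 → ℝ} (hf : Measurable f) {C : Set 𝒳}
    (hC : MeasurableSet C) {α β γ c : ℝ} (hα : 0 < α) (hβ : 0 < β) (hγ : 0 < γ)
    (hαβγ : α / β + α / γ = 1) (hc : 0 < c) {V : 𝒳 → ℝ} (hVm : Measurable V) {b : ℝ}
    (hb : 0 ≤ b)
    (hdrift : ∀ y, ∫⁻ ω, ENNReal.ofReal (V (ω m)) + blockExp m f γ c 0 ω ∂Pa y
      ≤ ENNReal.ofReal (V y + b * C.indicator (fun _ => 1) y))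
    (μ : Measure 𝒳) [IsProbabilityMeasure μ] (hμV : ∫⁻ x, ENNReal.ofReal (V x) ∂μ ≠ ⊤) :
    psiNormE (μ.bind Pa) α
        (fun ω => sumBefore (pathTau m C ω) fun k => ENNReal.ofReal |pathZ m f k ω|)
      ≤ psiNormE (μ.bind Pa) β (fun ω => pathTau m C ω) *
        ENNReal.ofReal (c * max (log ((∫⁻ x, ENNReal.ofReal (V x) ∂μ).toReal + b) / log 2) 1
          ^ (1 / γ)) := by
  have := isProbabilityMeasure_bind hPa_meas.aemeasurable (ae_of_all μ inferInstance)
  set A := (∫⁻ x, ENNReal.ofReal (V x) ∂μ).toReal + b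
  have hA : 0 ≤ A := add_nonneg ENNReal.toReal_nonneg hb
  have hNc : ∫⁻ ω, supBefore (pathTau m C ω) (fun k => blockExp m f γ c k ω) ∂μ.bind Pa
      ≤ ENNReal.ofReal A := by
    refine (lintegral_bind_supBefore_blockExp_le hPa hPa_meas hC hf hVm hb hdrift μ).trans ?_
    calc _ ≤ ∫⁻ x, ENNReal.ofReal (V x) + ENNReal.ofReal b ∂μ :=
          lintegral_mono fun x => ENNReal.ofReal_add_le
      _ = ENNReal.ofReal A := by
          rw [lintegral_add_right _ measurable_const, lintegral_const, measure_univ, mul_one,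
            ENNReal.ofReal_add ENNReal.toReal_nonneg hb, ENNReal.ofReal_toReal hμV]
  have hN₂ := lintegral_supBefore_blockExp_le_two hC hf hγ hc hA hNc
  refine psiNormE_le_mul (by positivity) fun r hr hτ => ?_
  exact lintegral_expE_sumBefore_le_two hC hf hα hβ hγ hαβγ hr (by positivity) hτ hN₂

theorem stmt_18_general {𝒳 : Type*} [MeasurableSpace 𝒳]
    (κ : Kernel 𝒳 𝒳)
    (Pa : 𝒳 → Measure (ℕ → 𝒳)) [∀ x, IsProbabilityMeasure (Pa x)]
    (hPa_meas : Measurable Pa)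
    (hPa : ∀ x, Pa x = (κ x).bind fun y => (Pa y).map (prependPath x))
    (m : ℕ)
    (f : 𝒳 → ℝ) (hf : Measurable f)
    (α β γ c : ℝ) (hα : 0 < α) (hβ : α < β)
    (hγ : γ = α * β / (β - α)) (hc : 0 < c)
    (h : 𝒳 → ℝ)
    (hh : ∀ x, ∫⁻ ω, ENNReal.ofReal (Real.exp (|pathZ m f 0 ω| ^ γ / c ^ γ)) ∂(Pa x)
        = ENNReal.ofReal (Real.exp (h x)))
    (V : 𝒳 → ℝ) (hVm : Measurable V) (hV0 : ∀ x, 0 ≤ V x)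
    (C : Set 𝒳) (hC : MeasurableSet C)
    (b : ℝ) (hb : 0 < b)
    (hdrift : ∀ x, (∫⁻ ω, ENNReal.ofReal (V (ω m)) ∂(Pa x)) +
          ENNReal.ofReal (Real.exp (h x))
        ≤ ENNReal.ofReal (V x + b * Set.indicator C (fun _ => 1) x))
    (μ : Measure 𝒳) [IsProbabilityMeasure μ] :
    (psiNormE (μ.bind Pa) α
        (fun ω => sumBefore (pathTau m C ω) fun k => ENNReal.ofReal |pathZ m f k ω|)
      ≤ psiNormE (μ.bind Pa) β (fun ω => pathTau m C ω) *
          (if (∫⁻ x, ENNReal.ofReal (V x) ∂μ) = ⊤ then ⊤ else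
            ENNReal.ofReal (c * (max
              (Real.log ((∫⁻ x, ENNReal.ofReal (V x) ∂μ).toReal + b) / Real.log 2) 1)
                ^ (1 / γ)))) ∧
    (∀ x : 𝒳, psiNormE (Pa x) α
        (fun ω => sumBefore (pathTau m C ω) fun k => ENNReal.ofReal |pathZ m f k ω|)
      ≤ psiNormE (Pa x) β (fun ω => pathTau m C ω) *
          ENNReal.ofReal (c * (max (Real.log (V x + b) / Real.log 2) 1) ^ (1 / γ))) := by
  have hβ₀ : 0 < β := hα.trans hβ
  have hγ₀ : 0 < γ := hγ ▸ div_pos (mul_pos hα hβ₀) (sub_pos.mpr hβ)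
  have hαβγ : α / β + α / γ = 1 := by
    rw [hγ]
    field_simp [(sub_pos.mpr hβ).ne']
    ring
  have hdrift' (y : 𝒳) : ∫⁻ ω, ENNReal.ofReal (V (ω m)) + blockExp m f γ c 0 ω ∂Pa y
      ≤ ENNReal.ofReal (V y + b * C.indicator (fun _ => 1) y) := by
    have hVm' : Measurable fun ω : ℕ → 𝒳 => ENNReal.ofReal (V (ω m)) := by fun_prop
    rw [lintegral_add_left hVm']
    exact (hh y).symm ▸ hdrift y
  have bound := psiNormE_sumBefore_le hPa hPa_meas hf hC hα hβ₀ hγ₀ hαβγ hc hVm hb.le hdrift'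
  refine ⟨?_, fun x => ?_⟩
  · split_ifs with hμV
    · have := isProbabilityMeasure_bind hPa_meas.aemeasurable (ae_of_all μ inferInstance)
      rw [ENNReal.mul_top (one_pos.trans_le (one_le_psiNormE hβ₀ fun _ => one_le_pathTau)).ne']
      exact le_top
    · exact bound μ hμV
  · have hVx : ∫⁻ y, ENNReal.ofReal (V y) ∂Measure.dirac x = ENNReal.ofReal (V x) :=
      lintegral_dirac' x (ENNReal.measurable_ofReal.comp hVm)
    have := bound (Measure.dirac x) (hVx ▸ ENNReal.ofReal_ne_top)
    rwa [Measure.dirac_bind hPa_meas, hVx, ENNReal.toReal_ofReal (hV0 x)] at this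

/-- Regular drift condition, bound for an arbitrary initial distribution `μ`:
`‖Σ_{k<τ_C}|Z_k(f)|‖_{ψ_α,P_μ} ≤ ‖τ_C‖_{ψ_β,P_μ} · c (max(log(μ(V)+b)/log 2, 1))^{1/γ}`,
and in particular, for `μ = δ_x`,
`‖Σ_{k<τ_C}|Z_k(f)|‖_{ψ_α,P_x} ≤ ‖τ_C‖_{ψ_β,P_x} · c (max(log(V(x)+b)/log 2, 1))^{1/γ}`;
all inequalities interpreted in `[0,∞]` (the right-hand side of the first being `∞` when
`μ(V) = ∞`).  Here `Pa x` is the Ionescu–Tulcea path measure of the canonical chain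
started at `x`, characterized by the recursion `hPa`, and `P_μ = μ.bind Pa`. -/
theorem stmt_18 {𝒳 : Type*} [MeasurableSpace 𝒳]
    (κ : Kernel 𝒳 𝒳) [IsMarkovKernel κ]
    (Pa : 𝒳 → Measure (ℕ → 𝒳)) [∀ x, IsProbabilityMeasure (Pa x)]
    (hPa_meas : Measurable Pa)
    (hPa : ∀ x, Pa x = (κ x).bind fun y => (Pa y).map (prependPath x))
    (m : ℕ) (hm : 1 ≤ m)
    (f : 𝒳 → ℝ) (hf : Measurable f)
    (α β γ c : ℝ) (hα : 0 < α) (hα1 : α ≤ 1) (hβ : α < β)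
    (hγ : γ = α * β / (β - α)) (hc : 0 < c)
    (h : 𝒳 → ℝ) (hhm : Measurable h)
    (hh : ∀ x, ∫⁻ ω, ENNReal.ofReal (Real.exp (|pathZ m f 0 ω| ^ γ / c ^ γ)) ∂(Pa x)
        = ENNReal.ofReal (Real.exp (h x)))
    (V : 𝒳 → ℝ) (hVm : Measurable V) (hV0 : ∀ x, 0 ≤ V x)
    (C : Set 𝒳) (hC : MeasurableSet C)
    (b K : ℝ) (hb : 0 < b) (hK : 0 < K) (hVK : ∀ x ∈ C, V x ≤ K)
    (hdrift : ∀ x, (∫⁻ ω, ENNReal.ofReal (V (ω m)) ∂(Pa x)) +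
          ENNReal.ofReal (Real.exp (h x))
        ≤ ENNReal.ofReal (V x + b * Set.indicator C (fun _ => 1) x))
    (μ : Measure 𝒳) [IsProbabilityMeasure μ] :
    (psiNormE (μ.bind Pa) α
        (fun ω => sumBefore (pathTau m C ω) fun k => ENNReal.ofReal |pathZ m f k ω|)
      ≤ psiNormE (μ.bind Pa) β (fun ω => pathTau m C ω) *
          (if (∫⁻ x, ENNReal.ofReal (V x) ∂μ) = ⊤ then ⊤ else
            ENNReal.ofReal (c * (max
              (Real.log ((∫⁻ x, ENNReal.ofReal (V x) ∂μ).toReal + b) / Real.log 2) 1)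
                ^ (1 / γ)))) ∧
    (∀ x : 𝒳, psiNormE (Pa x) α
        (fun ω => sumBefore (pathTau m C ω) fun k => ENNReal.ofReal |pathZ m f k ω|)
      ≤ psiNormE (Pa x) β (fun ω => pathTau m C ω) *
          ENNReal.ofReal (c * (max (Real.log (V x + b) / Real.log 2) 1) ^ (1 / γ))) :=
  stmt_18_general κ Pa hPa_meas hPa m f hf α β γ c hα hβ hγ hc h hh V hVm hV0 C hC b hb hdrift μ
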